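/- Let 0 < λ < 1/3 and let E ⊆ 𝕋 be an open subset of the circle that is a union of pairwise disjoint open arcs such that for each integer j ≥ 1 exactly 2^{j−1} of the arcs have length λ^j (and there are no other arcs). (Such an E arises as the complement of a fat Cantor set of ratio λ.) Then there exists a constant C > 0 depending only on λ such that τ(h,E) ≤ C·h^{1 − log 2/ log(1/λ)} for all h with 0 < h ≤ λ. -/

import Mathlib

/-!
Translation by `h` moves an arc of length `l` into a set whose symmetric difference with the
arc has measure at most `2 min(l, h)`, so `τ(h, E) ≤ 2 ∑ⱼ 2ʲ min(λ^{j+1}, h)`. Choose `J` with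
`λ^{J+1} < h ≤ λ^J`: the terms with `j < J` contribute at most `2^J h`, and the rest form a
geometric series of ratio `2λ < 1` dominated by its first term `2^J λ^{J+1} ≤ 2^J h`. Finally
`λ^{-α} = 2` for `α = log 2 / log(1/λ)`, so `2^J = (λ^J)^{-α} ≤ h^{-α}` and `2^J h ≤ h^{1-α}`.
-/

open MeasureTheory Set

/-- `τ(h,E)`: the measure of the set where the characteristic function of `E`
translated by `h` differs from itself. -/
noncomputable def tau (h : ℝ) (E : Set (AddCircle (1:ℝ))) : ℝ :=
  (volume {x : AddCircle (1:ℝ) |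
    E.indicator (fun _ => (1:ℝ)) (x + ((h : ℝ) : AddCircle (1:ℝ)))
      ≠ E.indicator (fun _ => (1:ℝ)) x}).toReal

/-- The open arc of the circle which is the image of the interval `(a, a+l)`. -/
noncomputable def arc (a l : ℝ) : Set (AddCircle (1:ℝ)) :=
  (fun r : ℝ => (r : AddCircle (1:ℝ))) '' Set.Ioo a (a + l)

open scoped symmDiff

lemma Set.Ioo_symmDiff_Ioo_subset {α : Type*} [LinearOrder α] (a b c d : α) :
    Ioo a b ∆ Ioo c d ⊆ uIcc a c ∪ uIcc b d := by
  intro x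
  simp only [mem_symmDiff, mem_Ioo, mem_union, mem_uIcc]
  grind

lemma Set.image_symmDiff_subset {α β : Type*} (f : α → β) (s t : Set α) :
    (f '' s) ∆ (f '' t) ⊆ f '' (s ∆ t) := by
  rintro _ (⟨⟨x, hx, rfl⟩, hxt⟩ | ⟨⟨x, hx, rfl⟩, hxs⟩)
  · exact ⟨x, Or.inl ⟨hx, fun h ↦ hxt ⟨x, h, rfl⟩⟩, rfl⟩
  · exact ⟨x, Or.inr ⟨hx, fun h ↦ hxs ⟨x, h, rfl⟩⟩, rfl⟩

namespace AddCircle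

variable {T : ℝ}

lemma image_coe_Icc_subset_closedBall (a b : ℝ) :
    ((↑) : ℝ → AddCircle T) '' Icc a b ⊆ Metric.closedBall ↑((a + b) / 2) ((b - a) / 2) := by
  rintro _ ⟨x, hx, rfl⟩
  rw [Metric.mem_closedBall, dist_eq_norm, ← coe_sub]
  refine (QuotientAddGroup.norm_mk_le_norm).trans ?_
  rw [Real.norm_eq_abs, abs_le]
  constructor <;> linarith [hx.1, hx.2]

variable [Fact (0 < T)]

lemma volume_image_coe_Icc_le (a b : ℝ) :
    volume (((↑) : ℝ → AddCircle T) '' Icc a b) ≤ ENNReal.ofReal (b - a) := by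
  refine (measure_mono (image_coe_Icc_subset_closedBall a b)).trans ?_
  rw [volume_closedBall T]
  exact ENNReal.ofReal_le_ofReal (by linarith [min_le_right T (2 * ((b - a) / 2))])

lemma volume_image_coe_uIcc_le (a b : ℝ) :
    volume (((↑) : ℝ → AddCircle T) '' uIcc a b) ≤ ENNReal.ofReal |a - b| := by
  simpa [uIcc, max_sub_min_eq_abs'] using volume_image_coe_Icc_le (T := T) (min a b) (max a b)

end AddCircle

lemma arc_subset_image_Icc (a l : ℝ) : arc a l ⊆ (↑) '' Icc a (a + l) :=
  image_mono Ioo_subset_Icc_self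

lemma volume_arc_le (a l : ℝ) : volume (arc a l) ≤ ENNReal.ofReal l :=
  (measure_mono (arc_subset_image_Icc a l)).trans <| by
    simpa using AddCircle.volume_image_coe_Icc_le (T := 1) a (a + l)

lemma arc_symmDiff_arc_subset (a b l : ℝ) :
    arc a l ∆ arc b l ⊆ ((↑) : ℝ → AddCircle (1:ℝ)) '' (uIcc a b ∪ uIcc (a + l) (b + l)) :=
  (image_symmDiff_subset _ _ _).trans (image_mono (Ioo_symmDiff_Ioo_subset _ _ _ _))

lemma volume_arc_symmDiff_arc_le (a b l : ℝ) :
    volume (arc a l ∆ arc b l) ≤ 2 * ENNReal.ofReal (min l |a - b|) := by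
  rw [ENNReal.ofReal_min, mul_min, le_min_iff, two_mul, two_mul]
  constructor
  · exact (measure_mono symmDiff_subset_union).trans <|
      (measure_union_le _ _).trans (add_le_add (volume_arc_le a l) (volume_arc_le b l))
  · refine (measure_mono (arc_symmDiff_arc_subset a b l)).trans ?_
    rw [image_union]
    refine (measure_union_le _ _).trans (add_le_add ?_ ?_)
    · exact AddCircle.volume_image_coe_uIcc_le a b
    · simpa using AddCircle.volume_image_coe_uIcc_le (T := 1) (a + l) (b + l)

lemma preimage_add_arc (h a l : ℝ) : (· + (h : AddCircle (1:ℝ))) ⁻¹' arc a l = arc (a - h) l := by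
  rw [← image_add_right', arc, arc, image_image]
  simp_rw [← sub_eq_add_neg, ← AddCircle.coe_sub]
  rw [← image_image (fun r : ℝ => (r : AddCircle (1:ℝ))) (· - h), image_sub_const_Ioo,
    sub_add_eq_add_sub]

lemma setOf_indicator_ne_indicator_eq_symmDiff {α : Type*} (f : α → α) (E : Set α) :
    {x | E.indicator (fun _ ↦ (1:ℝ)) (f x) ≠ E.indicator (fun _ ↦ (1:ℝ)) x} = (f ⁻¹' E) ∆ E := by
  ext x
  by_cases hfx : f x ∈ E <;> by_cases hx : x ∈ E <;> simp [mem_symmDiff, hfx, hx]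

lemma tau_eq_volume_symmDiff (h : ℝ) (E : Set (AddCircle (1:ℝ))) :
    tau h E = (volume (((· + (h : AddCircle (1:ℝ))) ⁻¹' E) ∆ E)).toReal := by
  rw [tau, setOf_indicator_ne_indicator_eq_symmDiff]

lemma volume_preimage_add_iUnion_arc_symmDiff_le {ι : Type*} [Countable ι] (c l : ι → ℝ) (h : ℝ) :
    volume (((· + (h : AddCircle (1:ℝ))) ⁻¹' ⋃ i, arc (c i) (l i)) ∆ ⋃ i, arc (c i) (l i))
      ≤ ∑' i, 2 * ENNReal.ofReal (min (l i) |h|) := by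
  simp_rw [preimage_iUnion, preimage_add_arc]
  refine (measure_mono iUnion_symmDiff_iUnion_subset).trans <|
    (measure_iUnion_le _).trans <| ENNReal.tsum_le_tsum fun i ↦ ?_
  simpa using volume_arc_symmDiff_arc_le (c i - h) (c i) (l i)

lemma ENNReal.tsum_sigma_fin (n : ℕ → ℕ) (f : ℕ → ENNReal) :
    ∑' i : Σ j, Fin (n j), f i.1 = ∑' j, (n j : ENNReal) * f j := by
  rw [ENNReal.tsum_sigma']
  congr 1 with j
  simp [tsum_fintype]

section GeometricSplit

variable {lam h : ℝ}

lemma summable_two_pow_mul_min (hlam0 : 0 ≤ lam) (hlam : 2 * lam < 1) (hh : 0 ≤ h) :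
    Summable fun j : ℕ ↦ (2:ℝ) ^ j * min (lam ^ (j + 1)) h := by
  refine Summable.of_nonneg_of_le (fun j ↦ by positivity) (fun j ↦ ?_)
    ((summable_geometric_of_lt_one (by positivity) hlam).mul_left lam)
  calc (2:ℝ) ^ j * min (lam ^ (j + 1)) h ≤ 2 ^ j * lam ^ (j + 1) := by gcongr; exact min_le_left _ _
    _ = lam * (2 * lam) ^ j := by ring

lemma tsum_two_pow_mul_min_le (hlam0 : 0 ≤ lam) (hlam : 2 * lam < 1) (hh : 0 ≤ h) {J : ℕ}
    (hJ : lam ^ (J + 1) ≤ h) :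
    ∑' j : ℕ, (2:ℝ) ^ j * min (lam ^ (j + 1)) h ≤ 2 ^ J * h * (1 + (1 - 2 * lam)⁻¹) := by
  have hsum := summable_two_pow_mul_min hlam0 hlam hh
  rw [← hsum.sum_add_tsum_nat_add J, mul_add, mul_one]
  gcongr
  · calc ∑ j ∈ Finset.range J, (2:ℝ) ^ j * min (lam ^ (j + 1)) h
        ≤ ∑ j ∈ Finset.range J, (2:ℝ) ^ j * h :=
          Finset.sum_le_sum fun j _ ↦ by gcongr; exact min_le_right _ _
      _ ≤ 2 ^ J * h := by
          rw [← Finset.sum_mul, geom_sum_eq (by norm_num : (2:ℝ) ≠ 1)]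
          gcongr
          linarith
  · calc ∑' j : ℕ, (2:ℝ) ^ (j + J) * min (lam ^ (j + J + 1)) h
        ≤ ∑' j : ℕ, 2 ^ J * lam ^ (J + 1) * (2 * lam) ^ j := by
          refine ((summable_nat_add_iff J).2 hsum).tsum_le_tsum (fun j ↦ ?_)
            ((summable_geometric_of_lt_one (by positivity) hlam).mul_left _)
          calc (2:ℝ) ^ (j + J) * min (lam ^ (j + J + 1)) h ≤ 2 ^ (j + J) * lam ^ (j + J + 1) := by
                gcongr; exact min_le_left _ _
            _ = 2 ^ J * lam ^ (J + 1) * (2 * lam) ^ j := by ring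
      _ = 2 ^ J * lam ^ (J + 1) * (1 - 2 * lam)⁻¹ := by
          rw [tsum_mul_left, tsum_geometric_of_lt_one (by positivity) hlam]
      _ ≤ 2 ^ J * h * (1 - 2 * lam)⁻¹ := by
          have : 0 < 1 - 2 * lam := by linarith
          gcongr

end GeometricSplit

lemma Real.rpow_neg_log_two_div_log_one_div {lam : ℝ} (hlam0 : 0 < lam) (hlam1 : lam < 1) :
    lam ^ (-(Real.log 2 / Real.log (1 / lam))) = 2 := by
  have hlog : Real.log lam ≠ 0 := (Real.log_neg hlam0 hlam1).ne
  rw [Real.rpow_def_of_pos hlam0, one_div, Real.log_inv, div_neg, neg_neg,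
    mul_div_cancel₀ _ hlog, Real.exp_log two_pos]

lemma two_pow_mul_le_rpow {lam h : ℝ} (hlam0 : 0 < lam) (hlam1 : lam < 1) (hh : 0 < h) {J : ℕ}
    (hJ : h ≤ lam ^ J) :
    (2:ℝ) ^ J * h ≤ h ^ (1 - Real.log 2 / Real.log (1 / lam)) := by
  have hα : 0 ≤ Real.log 2 / Real.log (1 / lam) :=
    div_nonneg (Real.log_nonneg one_le_two) (Real.log_nonneg (one_le_one_div hlam0 hlam1.le))
  calc (2:ℝ) ^ J * h = (lam ^ (-(Real.log 2 / Real.log (1 / lam)))) ^ J * h := by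
        rw [Real.rpow_neg_log_two_div_log_one_div hlam0 hlam1]
    _ = (lam ^ J) ^ (-(Real.log 2 / Real.log (1 / lam))) * h := by
        rw [Real.rpow_pow_comm hlam0.le]
    _ ≤ h ^ (-(Real.log 2 / Real.log (1 / lam))) * h :=
        mul_le_mul_of_nonneg_right (Real.rpow_le_rpow_of_nonpos hh hJ (neg_nonpos.2 hα)) hh.le
    _ = h ^ (1 - Real.log 2 / Real.log (1 / lam)) := by
        rw [sub_eq_neg_add, Real.rpow_add hh, Real.rpow_one]

lemma tau_iUnion_arc_le {lam h : ℝ} (hlam0 : 0 ≤ lam) (hlam : 2 * lam < 1) (hh : 0 ≤ h)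
    (c : (Σ j : ℕ, Fin (2 ^ j)) → ℝ) :
    tau h (⋃ i : (Σ j : ℕ, Fin (2 ^ j)), arc (c i) (lam ^ (i.1 + 1)))
      ≤ 2 * ∑' j : ℕ, (2:ℝ) ^ j * min (lam ^ (j + 1)) h := by
  have hsum := summable_two_pow_mul_min hlam0 hlam hh
  rw [tau_eq_volume_symmDiff]
  refine ENNReal.toReal_le_of_le_ofReal
    (mul_nonneg zero_le_two (tsum_nonneg fun j ↦ by positivity)) ?_
  calc _ ≤ ∑' i : (Σ j : ℕ, Fin (2 ^ j)), 2 * ENNReal.ofReal (min (lam ^ (i.1 + 1)) |h|) :=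
        volume_preimage_add_iUnion_arc_symmDiff_le _ _ h
    _ = 2 * ∑' j : ℕ, ENNReal.ofReal ((2:ℝ) ^ j * min (lam ^ (j + 1)) h) := by
        rw [ENNReal.tsum_sigma_fin (2 ^ ·) (fun j ↦ 2 * ENNReal.ofReal (min (lam ^ (j + 1)) |h|)),
          ← ENNReal.tsum_mul_left, abs_of_nonneg hh]
        congr 1 with j
        rw [ENNReal.ofReal_mul (by positivity), ENNReal.ofReal_pow zero_le_two,
          ENNReal.ofReal_ofNat]
        push_cast
        ring
    _ = ENNReal.ofReal (2 * ∑' j : ℕ, (2:ℝ) ^ j * min (lam ^ (j + 1)) h) := by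
        rw [ENNReal.ofReal_mul zero_le_two,
          ENNReal.ofReal_tsum_of_nonneg (fun j ↦ by positivity) hsum]
        simp

theorem stmt_15_general (lam : ℝ) (hlam : 0 < lam) (hlam' : lam < 1/3)
    (c : (Σ j : ℕ, Fin (2 ^ j)) → ℝ) (E : Set (AddCircle (1:ℝ)))
    (hE : E = ⋃ i : (Σ j : ℕ, Fin (2 ^ j)), arc (c i) (lam ^ (i.1 + 1))) :
    ∃ C > 0, ∀ h : ℝ, 0 < h → h ≤ lam →
      tau h E ≤ C * h ^ (1 - Real.log 2 / Real.log (1 / lam)) := by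
  have h2lam : 2 * lam < 1 := by linarith
  refine ⟨2 * (1 + (1 - 2 * lam)⁻¹), by positivity, fun h hh hhlam ↦ ?_⟩
  obtain ⟨J, hJ_lt, hJ_le⟩ :=
    exists_nat_pow_near_of_lt_one hh (by linarith) hlam (by linarith : lam < 1)
  calc tau h E ≤ 2 * ∑' j : ℕ, (2:ℝ) ^ j * min (lam ^ (j + 1)) h :=
        hE ▸ tau_iUnion_arc_le hlam.le h2lam hh.le c
    _ ≤ 2 * (2 ^ J * h * (1 + (1 - 2 * lam)⁻¹)) := by
        gcongr
        exact tsum_two_pow_mul_min_le hlam.le h2lam hh.le hJ_lt.le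
    _ = 2 * (1 + (1 - 2 * lam)⁻¹) * (2 ^ J * h) := by ring
    _ ≤ 2 * (1 + (1 - 2 * lam)⁻¹) * h ^ (1 - Real.log 2 / Real.log (1 / lam)) :=
        mul_le_mul_of_nonneg_left (two_pow_mul_le_rpow hlam (by linarith) hh hJ_le) (by positivity)

/-- Let `0 < λ < 1/3` and let `E ⊆ 𝕋` be a union of pairwise disjoint
open arcs such that for each `j ≥ 1` exactly `2^{j-1}` arcs have length `λ^j` (indexed here
by `⟨j, i⟩ : Σ j : ℕ, Fin (2^j)` with length `λ^{j+1}`). Then there is `C > 0`, depending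
only on `λ`, with `τ(h,E) ≤ C·h^{1 - log 2 / log(1/λ)}` for all `0 < h ≤ λ`. -/
theorem stmt_15 (lam : ℝ) (hlam : 0 < lam) (hlam' : lam < 1/3)
    (c : (Σ j : ℕ, Fin (2 ^ j)) → ℝ) (E : Set (AddCircle (1:ℝ)))
    (hE : E = ⋃ i : (Σ j : ℕ, Fin (2 ^ j)), arc (c i) (lam ^ (i.1 + 1)))
    (hdisj : Pairwise (Function.onFun Disjoint
      (fun i : (Σ j : ℕ, Fin (2 ^ j)) => arc (c i) (lam ^ (i.1 + 1))))) :
    ∃ C > 0, ∀ h : ℝ, 0 < h → h ≤ lam →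
      tau h E ≤ C * h ^ (1 - Real.log 2 / Real.log (1 / lam)) :=
  stmt_15_general lam hlam hlam' c E hE
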